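/- arXiv:2501.16659 — 4 statements merged into one kernel-verified Lean document; each statement's English description precedes it below -/
import Mathlib

section
/- Let V : [0,T] × ℝ → ℝ be defined by V(t,x) = (x + (λ−z)e^{−r(T−t)})²·e^{−(ρ²−2r)(T−t)} + ξ(ρ²−2r)/4·(T²−t²) − (ξ/2)[(ρ²−2r)T − log(σ²/(πξ))](T−t) − λ², with constants ρ, r, λ, z ∈ ℝ, σ > 0, ξ > 0. Then V satisfies the reduced HJB equation V_t(t,x) + V_x(t,x)·r·x − (1/2)·ρ²·V_x(t,x)²/V_xx(t,x) − (ξ/2)·log(2πξ/(σ²·V_xx(t,x))) = 0 for all (t,x) ∈ [0,T] × ℝ, and V_xx(t,x) = 2e^{−(ρ²−2r)(T−t)} > 0. -/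
/-!
Writing `V t x = (x + A t)² B t + C t` with `A' = r A` and `B' = (ρ² - 2r) B`, one gets
`V_xx = 2 B`, and in `V_t + r x V_x - ρ² V_x² / (2 V_xx)` every term proportional to `(x + A)² B`
cancels (the coefficients are `(ρ² - 2r) + 2r - ρ²`). The HJB residual therefore reduces to
`C'(t) - (ξ/2) log (2πξ / (σ² · 2B))`, and `C` is chosen so that this vanishes.
-/

open Set Real

def quadValue (A B C : ℝ → ℝ) (t x : ℝ) : ℝ := (x + A t) ^ 2 * B t + C t

section QuadValue

variable {A B C : ℝ → ℝ}

theorem hasDerivAt_quadValue_space (t x : ℝ) :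
    HasDerivAt (fun y => quadValue A B C t y) (2 * (x + A t) * B t) x := by
  have h := ((((hasDerivAt_id' x).add_const (A t)).fun_pow 2).mul_const (B t)).add_const (C t)
  exact h.congr_deriv (by norm_num)

theorem deriv_quadValue_space (t : ℝ) :
    deriv (fun y => quadValue A B C t y) = fun x => 2 * (x + A t) * B t :=
  funext fun x => (hasDerivAt_quadValue_space t x).deriv

theorem deriv_deriv_quadValue_space (t x : ℝ) :
    deriv (fun y => deriv (fun y' => quadValue A B C t y') y) x = 2 * B t := by
  rw [deriv_quadValue_space]
  have h := (((hasDerivAt_id' x).add_const (A t)).const_mul 2).mul_const (B t)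
  convert h.deriv using 1
  ring

theorem hasDerivAt_quadValue_time {A' B' C' t : ℝ} (x : ℝ) (hA : HasDerivAt A A' t)
    (hB : HasDerivAt B B' t) (hC : HasDerivAt C C' t) :
    HasDerivAt (fun s => quadValue A B C s x)
      (2 * (x + A t) * A' * B t + (x + A t) ^ 2 * B' + C') t := by
  have h := (((hA.const_add x).fun_pow 2).fun_mul hB).fun_add hC
  exact h.congr_deriv (by norm_num)

theorem quadValue_hjb_residual {ρ r C' t : ℝ} (x : ℝ) (hA : HasDerivAt A (r * A t) t)
    (hB : HasDerivAt B ((ρ ^ 2 - 2 * r) * B t) t) (hC : HasDerivAt C C' t) :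
    deriv (fun s => quadValue A B C s x) t
        + deriv (fun y => quadValue A B C t y) x * r * x
        - (1 / 2) * ρ ^ 2 * (deriv (fun y => quadValue A B C t y) x) ^ 2
          / deriv (fun y => deriv (fun y' => quadValue A B C t y') y) x = C' := by
  rw [(hasDerivAt_quadValue_time x hA hB hC).deriv, deriv_deriv_quadValue_space,
    deriv_quadValue_space]
  linear_combination (-(x + A t) ^ 2 * ρ ^ 2) * mul_self_mul_inv (B t)

end QuadValue

theorem hasDerivAt_exp_neg_mul_sub (a T t : ℝ) :
    HasDerivAt (fun s => exp (-a * (T - s))) (a * exp (-a * (T - t))) t := by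
  have h := (((hasDerivAt_id' t).const_sub T).const_mul (-a)).exp
  convert h using 1
  ring

theorem stmt_9_general (ρ r lam z σ ξ T : ℝ) (hσ : 0 < σ) (hξ : 0 < ξ)
    (V : ℝ → ℝ → ℝ)
    (hV : ∀ t x, V t x
      = (x + (lam - z) * Real.exp (-r * (T - t))) ^ 2 * Real.exp (-(ρ ^ 2 - 2 * r) * (T - t))
        + ξ * (ρ ^ 2 - 2 * r) / 4 * (T ^ 2 - t ^ 2)
        - (ξ / 2) * ((ρ ^ 2 - 2 * r) * T - Real.log (σ ^ 2 / (Real.pi * ξ))) * (T - t)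
        - lam ^ 2) :
    ∀ t ∈ Icc (0 : ℝ) T, ∀ x : ℝ,
      (deriv (fun y => deriv (fun x' => V t x') y) x = 2 * Real.exp (-(ρ ^ 2 - 2 * r) * (T - t))
        ∧ 0 < deriv (fun y => deriv (fun x' => V t x') y) x)
      ∧ deriv (fun s => V s x) t
          + deriv (fun x' => V t x') x * r * x
          - (1 / 2) * ρ ^ 2 * (deriv (fun x' => V t x') x) ^ 2
              / deriv (fun y => deriv (fun x' => V t x') y) x
          - (ξ / 2) * Real.log (2 * Real.pi * ξ
              / (σ ^ 2 * deriv (fun y => deriv (fun x' => V t x') y) x)) = 0 := by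
  intro t _ x
  set c := ρ ^ 2 - 2 * r
  set K := c * T - log (σ ^ 2 / (π * ξ))
  obtain rfl : V = quadValue (fun s => (lam - z) * exp (-r * (T - s)))
      (fun s => exp (-c * (T - s)))
      (fun s => ξ * c / 4 * (T ^ 2 - s ^ 2) - ξ / 2 * K * (T - s) - lam ^ 2) := by
    funext s y
    rw [hV]
    unfold quadValue
    ring
  have hA : HasDerivAt (fun s => (lam - z) * exp (-r * (T - s)))
      (r * ((lam - z) * exp (-r * (T - t)))) t :=
    ((hasDerivAt_exp_neg_mul_sub r T t).const_mul (lam - z)).congr_deriv (by ring)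
  have hC : HasDerivAt (fun s => ξ * c / 4 * (T ^ 2 - s ^ 2) - ξ / 2 * K * (T - s) - lam ^ 2)
      (ξ / 2 * (K - c * t)) t :=
    (((((hasDerivAt_pow 2 t).const_sub (T ^ 2)).const_mul (ξ * c / 4)).sub
      (((hasDerivAt_id' t).const_sub T).const_mul (ξ / 2 * K))).sub_const (lam ^ 2)).congr_deriv
      (by norm_num; ring)
  have hlog : log (2 * π * ξ / (σ ^ 2 * (2 * exp (-c * (T - t)))))
      = c * (T - t) - log (σ ^ 2 / (π * ξ)) := by
    rw [← log_exp (c * (T - t)), ← log_div (by positivity) (by positivity), neg_mul, exp_neg]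
    congr 1
    field_simp
  rw [quadValue_hjb_residual x hA (hasDerivAt_exp_neg_mul_sub c T t) hC,
    deriv_deriv_quadValue_space, hlog]
  exact ⟨⟨rfl, by positivity⟩, by ring⟩

/-- One-regime verification: the explicit candidate value function of the exploratory
mean-variance problem satisfies the reduced HJB equation
`V_t + V_x·r·x - (1/2)ρ²V_x²/V_xx - (ξ/2)log(2πξ/(σ²V_xx)) = 0` on `[0,T] × ℝ`,
and `V_xx(t,x) = 2e^{-(ρ²-2r)(T-t)} > 0`. -/
theorem stmt_9 (ρ r lam z σ ξ T : ℝ) (hσ : 0 < σ) (hξ : 0 < ξ) (hT : 0 < T)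
    (V : ℝ → ℝ → ℝ)
    (hV : ∀ t x, V t x
      = (x + (lam - z) * Real.exp (-r * (T - t))) ^ 2 * Real.exp (-(ρ ^ 2 - 2 * r) * (T - t))
        + ξ * (ρ ^ 2 - 2 * r) / 4 * (T ^ 2 - t ^ 2)
        - (ξ / 2) * ((ρ ^ 2 - 2 * r) * T - Real.log (σ ^ 2 / (Real.pi * ξ))) * (T - t)
        - lam ^ 2) :
    ∀ t ∈ Icc (0 : ℝ) T, ∀ x : ℝ,
      (deriv (fun y => deriv (fun x' => V t x') y) x = 2 * Real.exp (-(ρ ^ 2 - 2 * r) * (T - t))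
        ∧ 0 < deriv (fun y => deriv (fun x' => V t x') y) x)
      ∧ deriv (fun s => V s x) t
          + deriv (fun x' => V t x') x * r * x
          - (1 / 2) * ρ ^ 2 * (deriv (fun x' => V t x') x) ^ 2
              / deriv (fun y => deriv (fun x' => V t x') y) x
          - (ξ / 2) * Real.log (2 * Real.pi * ξ
              / (σ ^ 2 * deriv (fun y => deriv (fun x' => V t x') y) x)) = 0 :=
  stmt_9_general ρ r lam z σ ξ T hσ hξ V hV
end

section
/- Let V(t,x,i) = P(t,i)[x + (λ−z)H(t,i)]² + (λ−z)²C(t,i) + D(t,i) − λ², where for each regime i ∈ {1,…,l}, P(·,i), H(·,i), C(·,i), D(·,i) : [0,T] → ℝ are differentiable functions satisfying: P'(t,i) = (ρ_i² − 2r_i)P(t,i) − Σ_j q_ij P(t,j); H'(t,i) = r_i H(t,i) − (1/P(t,i))Σ_j q_ij P(t,j)(H(t,j) − H(t,i)); C'(t,i) = −Σ_j q_ij[P(t,j)(H(t,j) − H(t,i))² + C(t,j)]; D'(t,i) = (ξ/2)log(πξ/(σ_i² P(t,i))) − Σ_j q_ij D(t,j), with P(t,i) > 0 and Σ_j q_ij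 = 0 for each i. Then V satisfies, for all t, x, i: V_t(t,x,i) + V_x(t,x,i)·r_i·x + Σ_j q_ij V(t,x,j) − (1/2)ρ_i² V_x(t,x,i)²/V_xx(t,x,i) − (ξ/2)log(2πξ/(σ_i² V_xx(t,x,i))) = 0. -/
/-!
Write `a = λ - z` and `u = x + a H(t,i)`. Since `x + a H(t,j) = u + a (H(t,j) - H(t,i))`, the sum
`∑_j q_ij V(t,x,j)` expands into `u²∑ q P + 2au ∑ q P ΔH + a² ∑ q (P ΔH² + C) + ∑ q D` (the `λ²`
term dies because the rows of `Q` sum to `0`). These are exactly the coupling terms of the ODEs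
for `P, H, C, D`, so they cancel in the HJB expression; the entropy term cancels the logarithm in
`D'` because `V_xx = 2P`, and what is left is `(ρ² - 2r)Pu² + 2rPu² - ρ²Pu² = 0`.
-/

open Finset

theorem deriv_eq_of_eq_mul_add_sq {f : ℝ → ℝ} {p c d : ℝ} (hf : ∀ y, f y = p * (y + c) ^ 2 + d) :
    deriv f = fun y => 2 * p * (y + c) := by
  funext y
  have hp := ((((hasDerivAt_id' y).add_const c).fun_pow 2).const_mul p).add_const d
  rw [funext hf, hp.deriv]
  ring

theorem deriv_deriv_eq_of_eq_mul_add_sq {f : ℝ → ℝ} {p c d : ℝ}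
    (hf : ∀ y, f y = p * (y + c) ^ 2 + d) (x : ℝ) :
    deriv (fun y => deriv f y) x = 2 * p := by
  rw [deriv_eq_of_eq_mul_add_sq hf]
  exact (((hasDerivAt_id' x).add_const c).const_mul (2 * p)).deriv.trans (mul_one _)

theorem hasDerivAt_mul_add_mul_sq {p h c d : ℝ → ℝ} {p' h' c' d' t : ℝ} (x a k : ℝ)
    (hp : HasDerivAt p p' t) (hh : HasDerivAt h h' t) (hc : HasDerivAt c c' t)
    (hd : HasDerivAt d d' t) :
    HasDerivAt (fun s => p s * (x + a * h s) ^ 2 + a ^ 2 * c s + d s - k)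
      (p' * (x + a * h t) ^ 2 + 2 * a * p t * (x + a * h t) * h' + a ^ 2 * c' + d') t := by
  refine (((hp.fun_mul (((hh.const_mul a).const_add x).fun_pow 2)).fun_add
    (hc.const_mul _)).fun_add hd).sub_const k |>.congr_deriv ?_
  push_cast
  ring

theorem sum_mul_mul_add_sq {ι : Type*} [Fintype ι] {q : ι → ℝ} (hq : ∑ j, q j = 0)
    (p h c d : ι → ℝ) (i : ι) (x a k : ℝ) :
    ∑ j, q j * (p j * (x + a * h j) ^ 2 + a ^ 2 * c j + d j - k)
      = (x + a * h i) ^ 2 * ∑ j, q j * p j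
        + 2 * a * (x + a * h i) * ∑ j, q j * p j * (h j - h i)
        + a ^ 2 * ∑ j, q j * (p j * (h j - h i) ^ 2 + c j) + ∑ j, q j * d j := by
  have hterm : ∀ j, q j * (p j * (x + a * h j) ^ 2 + a ^ 2 * c j + d j - k)
      = (x + a * h i) ^ 2 * (q j * p j) + 2 * a * (x + a * h i) * (q j * p j * (h j - h i))
        + a ^ 2 * (q j * (p j * (h j - h i) ^ 2 + c j)) + q j * d j - k * q j := fun j => by ring
  simp only [hterm, sum_sub_distrib, sum_add_distrib, ← mul_sum, hq, mul_zero, sub_zero]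

theorem stmt_10_general (l : ℕ) (Q : Matrix (Fin l) (Fin l) ℝ)
    (h_rowsum : ∀ i, ∑ j, Q i j = 0)
    (σ ρ r : Fin l → ℝ)
    (ξ lam z : ℝ)
    (P H C D : ℝ → Fin l → ℝ)
    (hP_pos : ∀ t i, 0 < P t i)
    (hP : ∀ t i, HasDerivAt (fun s => P s i)
      ((ρ i ^ 2 - 2 * r i) * P t i - ∑ j, Q i j * P t j) t)
    (hH : ∀ t i, HasDerivAt (fun s => H s i)
      (r i * H t i - (1 / P t i) * ∑ j, Q i j * P t j * (H t j - H t i)) t)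
    (hC : ∀ t i, HasDerivAt (fun s => C s i)
      (-∑ j, Q i j * (P t j * (H t j - H t i) ^ 2 + C t j)) t)
    (hD : ∀ t i, HasDerivAt (fun s => D s i)
      ((ξ / 2) * Real.log (Real.pi * ξ / (σ i ^ 2 * P t i)) - ∑ j, Q i j * D t j) t)
    (V : ℝ → ℝ → Fin l → ℝ)
    (hV : ∀ t x i, V t x i
      = P t i * (x + (lam - z) * H t i) ^ 2 + (lam - z) ^ 2 * C t i + D t i - lam ^ 2) :
    ∀ t x i,
      deriv (fun s => V s x i) t
        + deriv (fun y => V t y i) x * r i * x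
        + ∑ j, Q i j * V t x j
        - (1 / 2) * ρ i ^ 2 * (deriv (fun y => V t y i) x) ^ 2
            / deriv (fun y' => deriv (fun y => V t y i) y') x
        - (ξ / 2) * Real.log (2 * Real.pi * ξ
            / (σ i ^ 2 * deriv (fun y' => deriv (fun y => V t y i) y') x)) = 0 := by
  intro t x i
  have hquad : ∀ y, V t y i
      = P t i * (y + (lam - z) * H t i) ^ 2 + ((lam - z) ^ 2 * C t i + D t i - lam ^ 2) :=
    fun y => by rw [hV]; ring
  have hVt := hasDerivAt_mul_add_mul_sq x (lam - z) (lam ^ 2) (hP t i) (hH t i) (hC t i) (hD t i)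
  rw [show (fun s => V s x i) = _ from funext fun s => hV s x i, hVt.deriv,
    deriv_deriv_eq_of_eq_mul_add_sq hquad, deriv_eq_of_eq_mul_add_sq hquad,
    show (fun j => Q i j * V t x j) = _ from funext fun j => by rw [hV],
    sum_mul_mul_add_sq (h_rowsum i) _ _ _ _ i,
    show 2 * Real.pi * ξ / (σ i ^ 2 * (2 * P t i)) = Real.pi * ξ / (σ i ^ 2 * P t i) by
      rw [mul_left_comm, mul_assoc, mul_div_mul_left _ _ two_ne_zero]]
  have hPi : P t i ≠ 0 := (hP_pos t i).ne'
  field_simp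
  ring

/-- Regime-switching verification (core of Theorem 3.1): the ansatz
`V(t,x,i) = P(t,i)[x+(λ-z)H(t,i)]² + (λ-z)²C(t,i) + D(t,i) - λ²`, built from solutions
of the coupled ODE system for `P, H, C, D`, satisfies the reduced HJB equation
`V_t + V_x·r_i·x + ∑_j q_ij V(t,x,j) - (1/2)ρ_i²V_x²/V_xx - (ξ/2)log(2πξ/(σ_i²V_xx)) = 0`. -/
theorem stmt_10 (l : ℕ) (Q : Matrix (Fin l) (Fin l) ℝ)
    (h_rowsum : ∀ i, ∑ j, Q i j = 0)
    (σ ρ r : Fin l → ℝ) (hσ : ∀ i, 0 < σ i)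
    (ξ lam z : ℝ) (hξ : 0 < ξ)
    (P H C D : ℝ → Fin l → ℝ)
    (hP_pos : ∀ t i, 0 < P t i)
    (hP : ∀ t i, HasDerivAt (fun s => P s i)
      ((ρ i ^ 2 - 2 * r i) * P t i - ∑ j, Q i j * P t j) t)
    (hH : ∀ t i, HasDerivAt (fun s => H s i)
      (r i * H t i - (1 / P t i) * ∑ j, Q i j * P t j * (H t j - H t i)) t)
    (hC : ∀ t i, HasDerivAt (fun s => C s i)
      (-∑ j, Q i j * (P t j * (H t j - H t i) ^ 2 + C t j)) t)
    (hD : ∀ t i, HasDerivAt (fun s => D s i)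
      ((ξ / 2) * Real.log (Real.pi * ξ / (σ i ^ 2 * P t i)) - ∑ j, Q i j * D t j) t)
    (V : ℝ → ℝ → Fin l → ℝ)
    (hV : ∀ t x i, V t x i
      = P t i * (x + (lam - z) * H t i) ^ 2 + (lam - z) ^ 2 * C t i + D t i - lam ^ 2) :
    ∀ t x i,
      deriv (fun s => V s x i) t
        + deriv (fun y => V t y i) x * r i * x
        + ∑ j, Q i j * V t x j
        - (1 / 2) * ρ i ^ 2 * (deriv (fun y => V t y i) x) ^ 2
            / deriv (fun y' => deriv (fun y => V t y i) y') x
        - (ξ / 2) * Real.log (2 * Real.pi * ξ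
            / (σ i ^ 2 * deriv (fun y' => deriv (fun y => V t y i) y') x)) = 0 :=
  stmt_10_general l Q h_rowsum σ ρ r ξ lam z P H C D hP_pos hP hH hC hD V hV
end

section
/- Suppose for each i the ODEs P'(t,i) = (ρ_i²−2r_i)P(t,i) − Σ_j q_ij P(t,j) with P(T,i)=1 hold, where Q=(q_ij) is a generator matrix and ρ_i, r_i are constants. Then P(t,i) > 0 for all t ∈ [0,T] and all i. -/
/-!
Suppose some `P(·, i)` is nonpositive somewhere in `[0, T]` and let `t₀ < T` be the last time at
which some coordinate `P(·, j)` is `≤ 0`. On `(t₀, T]` all coordinates are positive, so the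
off-diagonal terms of `Q` can only decrease the derivative: `P' ≤ (ρ_j² - 2r_j - q_jj) P` there.
Backward Grönwall then propagates `P(T, j) = 1 > 0` to `P(t₀, j) > 0`, a contradiction.
-/

open Set Real

theorem pos_of_hasDerivAt_le_mul_self {f f' : ℝ → ℝ} {a t₀ T : ℝ} (hle : t₀ ≤ T)
    (hf : ContinuousOn f (Icc t₀ T)) (hf' : ∀ s ∈ Ioo t₀ T, HasDerivAt f (f' s) s)
    (hbound : ∀ s ∈ Ioo t₀ T, f' s ≤ a * f s) (hT : 0 < f T) : 0 < f t₀ := by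
  -- `f' ≤ a f` says exactly that the weighted function `f e^{-a s}` is nonincreasing.
  have hanti : AntitoneOn (fun s => f s * exp (-(a * s))) (Icc t₀ T) := by
    refine antitoneOn_of_hasDerivWithinAt_nonpos (convex_Icc t₀ T)
      (f' := fun s => (f' s - a * f s) * exp (-(a * s))) (hf.mul (by fun_prop)) ?_ ?_
    · intro s hs
      rw [interior_Icc] at hs ⊢
      refine (((hf' s hs).mul ((hasDerivAt_id s).const_mul a).neg.exp).congr_deriv ?_)
        |>.hasDerivWithinAt
      simp only [Pi.neg_apply, id, mul_one]
      ring
    · intro s hs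
      rw [interior_Icc] at hs
      exact mul_nonpos_of_nonpos_of_nonneg (sub_nonpos.2 (hbound s hs)) (exp_pos _).le
  have hmono := hanti (left_mem_Icc.2 hle) (right_mem_Icc.2 hle) hle
  exact pos_of_mul_pos_left ((mul_pos hT (exp_pos _)).trans_le hmono) (exp_pos _).le

theorem diag_mul_le_sum_mul_of_offdiag_nonneg {ι : Type*} [Fintype ι] {Q : Matrix ι ι ℝ}
    (h_offdiag : ∀ i j, i ≠ j → 0 ≤ Q i j) {x : ι → ℝ} (hx : ∀ j, 0 ≤ x j) (i : ι) :
    Q i i * x i ≤ ∑ j, Q i j * x j := by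
  classical
  rw [← Finset.add_sum_erase _ _ (Finset.mem_univ i), le_add_iff_nonneg_right]
  exact Finset.sum_nonneg fun j hj =>
    mul_nonneg (h_offdiag i j (Finset.ne_of_mem_erase hj).symm) (hx j)

theorem exists_last_nonpos {ι : Type*} [Finite ι] {g : ι → ℝ → ℝ} {t T : ℝ}
    (hg : ∀ j, ContinuousOn (g j) (Icc t T)) (hgT : ∀ j, 0 < g j T)
    {i : ι} (hi : g i t ≤ 0) (htT : t ≤ T) :
    ∃ t₀ ∈ Ico t T, ∃ j, g j t₀ ≤ 0 ∧ ∀ s ∈ Ioc t₀ T, ∀ k, 0 < g k s := by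
  set B := ⋃ j, Icc t T ∩ g j ⁻¹' Iic 0
  have hB : IsCompact B := isCompact_Icc.of_isClosed_subset
    (isClosed_iUnion_of_finite fun j =>
      (hg j).preimage_isClosed_of_isClosed isClosed_Icc isClosed_Iic)
    (iUnion_subset fun j => inter_subset_left)
  obtain ⟨t₀, ht₀B, ht₀max⟩ := hB.exists_isGreatest ⟨t, mem_iUnion.2 ⟨i, ⟨le_rfl, htT⟩, hi⟩⟩
  obtain ⟨j, ⟨ht₀, ht₀T⟩, hj⟩ := mem_iUnion.1 ht₀B
  have ht₀_ne : t₀ ≠ T := by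
    rintro rfl
    exact (hgT j).not_ge hj
  refine ⟨t₀, ⟨ht₀, lt_of_le_of_ne ht₀T ht₀_ne⟩, j, hj, fun s hs k => ?_⟩
  by_contra! hk
  exact hs.1.not_ge (ht₀max (mem_iUnion.2 ⟨k, ⟨ht₀.trans hs.1.le, hs.2⟩, hk⟩))

theorem stmt_12_general (l : ℕ) (Q : Matrix (Fin l) (Fin l) ℝ)
    (h_offdiag : ∀ i j, i ≠ j → 0 ≤ Q i j)
    (ρ r : Fin l → ℝ) (T : ℝ)
    (P : ℝ → Fin l → ℝ)
    (hP : ∀ i, ∀ t ∈ Icc (0 : ℝ) T, HasDerivAt (fun s => P s i)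
      ((ρ i ^ 2 - 2 * r i) * P t i - ∑ j, Q i j * P t j) t)
    (hPT : ∀ i, P T i = 1) :
    ∀ t ∈ Icc (0 : ℝ) T, ∀ i, 0 < P t i := by
  intro t ht i
  by_contra! hneg
  have hcont : ∀ j, ContinuousOn (fun s => P s j) (Icc 0 T) := fun j s hs =>
    (hP j s hs).continuousAt.continuousWithinAt
  obtain ⟨t₀, ⟨htt₀, ht₀T⟩, j, hj, hpos⟩ := exists_last_nonpos
    (fun j => (hcont j).mono (Icc_subset_Icc_left ht.1)) (by simp [hPT]) hneg ht.2
  have hsub : Icc t₀ T ⊆ Icc 0 T := Icc_subset_Icc_left (ht.1.trans htt₀)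
  refine hj.not_gt (pos_of_hasDerivAt_le_mul_self (a := ρ j ^ 2 - 2 * r j - Q j j) ht₀T.le
    ((hcont j).mono hsub) (fun s hs => hP j s (hsub (Ioo_subset_Icc_self hs)))
    (fun s hs => ?_) (by simp [hPT]))
  have hdrift := diag_mul_le_sum_mul_of_offdiag_nonneg h_offdiag
    (fun k => (hpos s (Ioo_subset_Ioc_self hs) k).le) j
  linarith

/-- Positivity of the solution of the coupled linear ODE system
`P'(t,i) = (ρ_i²-2r_i)P(t,i) - ∑_j q_ij P(t,j)`, `P(T,i) = 1`, where `Q` is a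
generator matrix: `P(t,i) > 0` for all `t ∈ [0,T]` and all regimes `i`. -/
theorem stmt_12 (l : ℕ) (Q : Matrix (Fin l) (Fin l) ℝ)
    (h_offdiag : ∀ i j, i ≠ j → 0 ≤ Q i j)
    (h_rowsum : ∀ i, ∑ j, Q i j = 0)
    (ρ r : Fin l → ℝ) (T : ℝ) (hT : 0 < T)
    (P : ℝ → Fin l → ℝ)
    (hP : ∀ i, ∀ t ∈ Icc (0 : ℝ) T, HasDerivAt (fun s => P s i)
      ((ρ i ^ 2 - 2 * r i) * P t i - ∑ j, Q i j * P t j) t)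
    (hPT : ∀ i, P T i = 1) :
    ∀ t ∈ Icc (0 : ℝ) T, ∀ i, 0 < P t i :=
  stmt_12_general l Q h_offdiag ρ r T P hP hPT
end

section
/- Let p_im(t) = (e^{tQ})_{im} for a generator matrix Q on {1,…,l}, let P(·,j), H(·,j) be continuous on [0,T], and define C(t,i) = Σ_{m=1}^l Σ_{j=1}^l ∫_t^T p_{im}(s−t)·q_{mj}·P(s,j)·(H(s,j) − H(s,m))² ds. Then C(T,i) = 0 for all i, and C satisfies ∂_t C(t,i) = −Σ_{j=1}^l q_ij[P(t,j)(H(t,j) − H(t,i))² + C(t,j)]. -/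
/-! Since `e^{(s-t)Q} = e^{-tQ} e^{sQ}`, the vector `C(t)` equals `e^{-tQ} ∫_t^T e^{sQ} f(s) ds`
with `f(s,m) = ∑_j q_mj P(s,j) (H(s,j) - H(s,m))²`. The product rule and the fundamental theorem
of calculus then give `C' = -Q C - f`, which is the stated equation. -/

open Set Matrix NormedSpace

namespace Matrix

variable {m n : Type*} [Fintype n]

theorem hasDerivAt_mulVec_apply {A : ℝ → Matrix m n ℝ} {v : ℝ → n → ℝ} {A' : Matrix m n ℝ}
    {v' : n → ℝ} {t : ℝ} (hA : ∀ i j, HasDerivAt (fun u => A u i j) (A' i j) t)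
    (hv : ∀ j, HasDerivAt (fun u => v u j) (v' j) t) (i : m) :
    HasDerivAt (fun u => (A u *ᵥ v u) i) ((A' *ᵥ v t) i + (A t *ᵥ v') i) t := by
  simp only [mulVec, dotProduct, ← Finset.sum_add_distrib]
  exact HasDerivAt.fun_sum fun j _ => (hA i j).mul (hv j)

theorem intervalIntegral_mulVec_apply (A : Matrix m n ℝ) {g : ℝ → n → ℝ} {a b : ℝ}
    (hg : ∀ k, IntervalIntegrable (fun s => g s k) MeasureTheory.volume a b) (i : m) :
    ∫ s in a..b, (A *ᵥ g s) i = (A *ᵥ fun k => ∫ s in a..b, g s k) i := by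
  simp only [mulVec, dotProduct]
  rw [intervalIntegral.integral_finsetSum fun k _ => (hg k).const_mul _]
  simp only [intervalIntegral.integral_const_mul]

variable [DecidableEq n]

section LinftyOpNorm

attribute [local instance] Matrix.linftyOpNormedRing Matrix.linftyOpNormedAlgebra

theorem hasDerivAt_exp_smul_apply (Q : Matrix n n ℝ) (i j : n) (t : ℝ) :
    HasDerivAt (fun u : ℝ => exp (u • Q) i j) ((Q * exp (t • Q)) i j) t :=
  (LinearMap.toContinuousLinearMap (entryLinearMap ℝ ℝ i j)).hasFDerivAt.comp_hasDerivAt t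
    (hasDerivAt_exp_smul_const' Q t)

end LinftyOpNorm

theorem continuous_exp_smul (Q : Matrix n n ℝ) : Continuous fun u : ℝ => exp (u • Q) :=
  continuous_pi fun i => continuous_pi fun j => continuous_iff_continuousAt.2 fun t =>
    (hasDerivAt_exp_smul_apply Q i j t).continuousAt

theorem exp_sub_smul (Q : Matrix n n ℝ) (s t : ℝ) :
    exp ((s - t) • Q) = exp ((-t) • Q) * exp (s • Q) := by
  rw [sub_eq_neg_add, add_smul, exp_add_of_commute]
  exact ((Commute.refl Q).smul_left _).smul_right _

theorem exp_neg_smul_mul_exp_smul (Q : Matrix n n ℝ) (t : ℝ) :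
    exp ((-t) • Q) * exp (t • Q) = 1 := by
  rw [← exp_sub_smul, sub_self, zero_smul, exp_zero]

noncomputable def backwardExpIntegral (Q : Matrix n n ℝ) (f : ℝ → n → ℝ) (T t : ℝ) : n → ℝ :=
  fun i => ∫ s in t..T, (exp ((s - t) • Q) *ᵥ f s) i

variable {Q : Matrix n n ℝ} {f : ℝ → n → ℝ}

theorem backwardExpIntegral_eq_exp_mulVec (hf : Continuous f) (T t : ℝ) :
    backwardExpIntegral Q f T t =
      exp ((-t) • Q) *ᵥ fun k => ∫ s in t..T, (exp (s • Q) *ᵥ f s) k := by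
  ext i
  have hg := (continuous_exp_smul Q).matrix_mulVec hf
  simp only [backwardExpIntegral, exp_sub_smul, ← mulVec_mulVec]
  exact intervalIntegral_mulVec_apply _
    (fun k => ((continuous_apply k).comp hg).intervalIntegrable _ _) i

theorem hasDerivAt_backwardExpIntegral (hf : Continuous f) (T t : ℝ) (i : n) :
    HasDerivAt (fun u => backwardExpIntegral Q f T u i)
      (-(Q *ᵥ backwardExpIntegral Q f T t) i - f t i) t := by
  have hE : ∀ i k, HasDerivAt (fun u => exp ((-u) • Q) i k) ((-(Q * exp ((-t) • Q))) i k) t :=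
    fun i k => by
      simpa [Function.comp_def] using
        (hasDerivAt_exp_smul_apply Q i k (-t)).comp t (hasDerivAt_neg t)
  have hW : ∀ k, HasDerivAt (fun u => ∫ s in u..T, (exp (s • Q) *ᵥ f s) k)
      ((-(exp (t • Q) *ᵥ f t)) k) t := fun k => by
    have hg : Continuous fun s => (exp (s • Q) *ᵥ f s) k :=
      (continuous_apply k).comp ((continuous_exp_smul Q).matrix_mulVec hf)
    exact intervalIntegral.integral_hasDerivAt_left (hg.intervalIntegrable _ _)
      (hg.stronglyMeasurableAtFilter _ _) hg.continuousAt
  simp_rw [backwardExpIntegral_eq_exp_mulVec hf]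
  convert hasDerivAt_mulVec_apply hE hW i using 1
  have hinv : exp ((-t) • Q) *ᵥ exp (t • Q) *ᵥ f t = f t := by
    rw [mulVec_mulVec, exp_neg_smul_mul_exp_smul, one_mulVec]
  rw [mulVec_neg, hinv, neg_mulVec, mulVec_mulVec]
  simp only [Pi.neg_apply, sub_eq_add_neg]

end Matrix

theorem stmt_17_general (l : ℕ) (Q : Matrix (Fin l) (Fin l) ℝ)
    (T : ℝ)
    (P H : ℝ → Fin l → ℝ)
    (hP_cont : ∀ j, Continuous fun t => P t j)
    (hH_cont : ∀ j, Continuous fun t => H t j)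
    (C : ℝ → Fin l → ℝ)
    (hC : ∀ t i, C t i = ∑ m, ∑ j, ∫ s in t..T,
        NormedSpace.exp ((s - t) • Q) i m * Q m j * P s j * (H s j - H s m) ^ 2) :
    (∀ i, C T i = 0)
    ∧ ∀ i, ∀ t ∈ Icc (0 : ℝ) T,
        HasDerivAt (fun t => C t i)
          (-∑ j, Q i j * (P t j * (H t j - H t i) ^ 2 + C t j)) t := by
  set f : ℝ → Fin l → ℝ := fun s m => ∑ j, Q m j * P s j * (H s j - H s m) ^ 2
  have hf : Continuous f := continuous_pi fun m => by fun_prop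
  have hCf : C = backwardExpIntegral Q f T := by
    ext t i
    have hcont : ∀ m j, Continuous
        fun s => exp ((s - t) • Q) i m * Q m j * P s j * (H s j - H s m) ^ 2 := fun m j =>
      ((((continuous_exp_smul Q).comp (continuous_sub_right t)).matrix_elem i m).mul
        continuous_const).mul (hP_cont j) |>.mul (((hH_cont j).sub (hH_cont m)).pow 2)
    simp only [hC, backwardExpIntegral, mulVec, dotProduct, f, Finset.mul_sum, ← mul_assoc]
    refine .trans ?_ (intervalIntegral.integral_finsetSum fun m _ =>
      (continuous_finsetSum _ fun j _ => hcont m j).intervalIntegrable _ _).symm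
    exact Finset.sum_congr rfl fun m _ => (intervalIntegral.integral_finsetSum fun j _ =>
      (hcont m j).intervalIntegrable _ _).symm
  refine ⟨fun i => by simp [hC], fun i t _ => ?_⟩
  rw [hCf]
  convert hasDerivAt_backwardExpIntegral hf T t i using 1
  simp only [mulVec, dotProduct, f, mul_add, Finset.sum_add_distrib, mul_assoc]
  ring

/-- Integral representation of the coefficient `C(t,i)` of the regime-switching
value function: with `p_im(t) = (e^{tQ})_im`,
`C(t,i) = ∑_m ∑_j ∫_t^T p_im(s-t) q_mj P(s,j) (H(s,j) - H(s,m))² ds`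
satisfies `C(T,i) = 0` and `∂_t C(t,i) = -∑_j q_ij [P(t,j)(H(t,j)-H(t,i))² + C(t,j)]`. -/
theorem stmt_17 (l : ℕ) (Q : Matrix (Fin l) (Fin l) ℝ)
    (h_offdiag : ∀ i j, i ≠ j → 0 ≤ Q i j)
    (h_rowsum : ∀ i, ∑ j, Q i j = 0)
    (T : ℝ) (hT : 0 < T)
    (P H : ℝ → Fin l → ℝ)
    (hP_cont : ∀ j, Continuous fun t => P t j)
    (hH_cont : ∀ j, Continuous fun t => H t j)
    (C : ℝ → Fin l → ℝ)
    (hC : ∀ t i, C t i = ∑ m, ∑ j, ∫ s in t..T,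
        NormedSpace.exp ((s - t) • Q) i m * Q m j * P s j * (H s j - H s m) ^ 2) :
    (∀ i, C T i = 0)
    ∧ ∀ i, ∀ t ∈ Icc (0 : ℝ) T,
        HasDerivAt (fun t => C t i)
          (-∑ j, Q i j * (P t j * (H t j - H t i) ^ 2 + C t j)) t :=
  stmt_17_general l Q T P H hP_cont hH_cont C hC
end
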